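/- arXiv:1904.08551 — 2 statements merged into one kernel-verified Lean document; each statement's English description precedes it below -/
import Mathlib

section
/- For every ε > 0, inf_{s∈S} μ_0({θ ∈ Θ : f(θ,s) ≤ ε}) > 0. -/
open Filter MeasureTheory Topology

/-!
For each `s`, the open set `{θ | f (θ, s) < ε / 2}` is nonempty, hence has positive
`μ₀`-measure. Since `Θ` is compact, `f (·, s')` is uniformly within `ε / 2` of `f (·, s)` for
`s'` near `s`, so that set lies in the `ε`-sublevel set of every nearby `s'`. Finitely many
such neighbourhoods cover `S`, and the minimum of finitely many positive measures bounds the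
infimum from below.
-/

theorem eventually_forall_dist_lt_of_continuous {Θ S : Type*} [TopologicalSpace Θ]
    [CompactSpace Θ] [TopologicalSpace S] {f : Θ × S → ℝ} (hf : Continuous f) (s : S)
    {δ : ℝ} (hδ : 0 < δ) : ∀ᶠ s' in 𝓝 s, ∀ θ, dist (f (θ, s')) (f (θ, s)) < δ := by
  have h := isCompact_univ.eventually_forall_of_forall_eventually
    (P := fun s' θ ↦ dist (f (θ, s')) (f (θ, s)) < δ) (x₀ := s) fun θ _ ↦ by
      have hcont : Continuous fun z : S × Θ ↦ dist (f (z.2, z.1)) (f (z.2, s)) := by fun_prop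
      simpa using hcont.continuousAt.eventually_lt continuousAt_const (by simpa using hδ)
  simpa using h

theorem lt_iInf_of_forall_eventually_le {S α : Type*} [TopologicalSpace S] [CompactSpace S]
    [CompleteLinearOrder α] {a : α} (ha : a < ⊤) {g F : S → α} (hg : ∀ s, a < g s)
    (hF : ∀ s, ∀ᶠ s' in 𝓝 s, g s ≤ F s') : a < ⨅ s, F s := by
  obtain ⟨T, -, hT⟩ := isCompact_univ.elim_nhds_subcover (fun s ↦ {s' | g s ≤ F s'})
    fun s _ ↦ hF s
  have hcover : ∀ s, ∃ t ∈ T, g t ≤ F s := by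
    simpa [Set.subset_def] using hT
  refine lt_of_lt_of_le ((Finset.lt_inf_iff (s := T) (f := g) ha).2 fun t _ ↦ hg t)
    (le_iInf fun s ↦ ?_)
  obtain ⟨t, ht, hle⟩ := hcover s
  exact (Finset.inf_le ht).trans hle

theorem stmt3_general
    {Θ : Type} [MetricSpace Θ] [CompactSpace Θ] [MeasurableSpace Θ]
    {S : Type} [MetricSpace S] [CompactSpace S]
    (f : Θ × S → ℝ) (hfcont : Continuous f)
    (hfmin : ∀ s : S, ∃ θ : Θ, f (θ, s) = 0)
    (μ₀ : Measure Θ)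
    (hfull : ∀ A : Set Θ, IsOpen A → A.Nonempty → 0 < μ₀ A) :
    ∀ ε > (0 : ℝ), 0 < ⨅ s : S, μ₀ {θ : Θ | f (θ, s) ≤ ε} := by
  intro ε hε
  refine lt_iInf_of_forall_eventually_le ENNReal.zero_lt_top
    (g := fun s ↦ μ₀ {θ | f (θ, s) < ε / 2}) (fun s ↦ hfull _ ?_ ?_) fun s ↦ ?_
  · exact isOpen_lt (by fun_prop) continuous_const
  · obtain ⟨θ, hθ⟩ := hfmin s
    exact ⟨θ, show f (θ, s) < ε / 2 by linarith⟩
  filter_upwards [eventually_forall_dist_lt_of_continuous hfcont s (half_pos hε)]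
    with s' hs'
  refine measure_mono fun θ (hθ : f (θ, s) < ε / 2) ↦ ?_
  have hclose : f (θ, s') - f (θ, s) < ε / 2 := (abs_lt.1 (Real.dist_eq _ _ ▸ hs' θ)).2
  show f (θ, s') ≤ ε
  linarith

/-- If `Θ` and `S` are compact metric spaces, `f : Θ × S → ℝ` is
continuous, nonnegative, attains the value `0` in `θ` for every `s`, and `μ₀` is a
full-support Borel probability measure on `Θ`, then for every `ε > 0`,
`inf_{s∈S} μ₀({θ : f(θ,s) ≤ ε}) > 0`. -/
theorem stmt3
    {Θ : Type} [MetricSpace Θ] [CompactSpace Θ] [MeasurableSpace Θ] [BorelSpace Θ]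
    {S : Type} [MetricSpace S] [CompactSpace S]
    (f : Θ × S → ℝ) (hfcont : Continuous f) (hfnonneg : ∀ p, 0 ≤ f p)
    (hfmin : ∀ s : S, ∃ θ : Θ, f (θ, s) = 0)
    (μ₀ : Measure Θ) [IsProbabilityMeasure μ₀]
    (hfull : ∀ A : Set Θ, IsOpen A → A.Nonempty → 0 < μ₀ A) :
    ∀ ε > (0 : ℝ), 0 < ⨅ s : S, μ₀ {θ : Θ | f (θ, s) ≤ ε} :=
  stmt3_general f hfcont hfmin μ₀ hfull
end

section
/- Suppose the set Θ* of equilibrium models is finite and write Θ* ∪ {0,1} = {θ_0 < θ_1 < … < θ_N}. Then for each n ∈ {0,…,N−1}, one of the following holds: (i) for every θ ∈ (θ_n, θ_{n+1}) and every x ∈ F(δ_θ), θ(δ_x) > θ; or (ii) for every θ ∈ (θ_n, θ_{n+1}) and every x ∈ F(δ_θ), θ(δ_x) < θ. -/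
/-!
Fix an interval `(θₙ, θₙ₊₁)` free of equilibrium models. For `θ` in it and `x ∈ F(δ_θ)`, the
equality `θ(δ_x) = θ` would make `δ_x` an equilibrium with model `θ`. Nor can two best replies
point in opposite directions: if `θ(δ_{x₂}) < θ < θ(δ_{x₁})`, the closest model of the mixture
`t • δ_{x₁} + (1 - t) • δ_{x₂}` is the unique minimiser of `t K(·, δ_{x₁}) + (1 - t) K(·, δ_{x₂})`,
which depends continuously on `t` (Berge's maximum theorem), so it equals `θ` for some `t`, and
that mixture is an equilibrium with model `θ`. As `F` has closed graph, the parameters where some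
best reply points up, resp. down, form two relatively closed sets covering the interval, and
connectedness leaves only one of them.

The continuity in `t` needs care at the endpoints of `Θ = [0, 1]`: nothing makes
`y ↦ log (q / q_θ)` measurable, so near an endpoint `K(·, δ_x)` may be the junk value `0` of a
Bochner integral instead of being continuous. Where that happens, all nearby minimisers coincide.
-/

open MeasureTheory Filter Topology Set

noncomputable def diracPM {α : Type*} [MeasurableSpace α] (a : α) :
    MeasureTheory.ProbabilityMeasure α :=
  ⟨MeasureTheory.Measure.dirac a, inferInstance⟩

-- The second alternative is what `s ↦ ∫ h s` does near points where `h s` is not measurable.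
def TendstoOrEventuallyZero (f : ℝ → ℝ) (e : ℝ) : Prop :=
  Tendsto f (𝓝[Ioo 0 1] e) (𝓝 (f e)) ∨ ∀ᶠ s in 𝓝[Ioo 0 1] e, f s = 0

lemma frequently_eq_of_frequently_le_of_frequently_ge {f : ℝ → ℝ} {J : Set ℝ}
    (hJ : J.OrdConnected) (hf : ContinuousOn f J) {e c : ℝ}
    (hle : ∃ᶠ s in 𝓝[J] e, f s ≤ c) (hge : ∃ᶠ s in 𝓝[J] e, c ≤ f s) :
    ∃ᶠ s in 𝓝[J] e, f s = c := by
  rw [Metric.nhdsWithin_basis_ball.frequently_iff] at hle hge ⊢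
  intro ε hε
  obtain ⟨p, hp, hfp⟩ := hle ε hε
  obtain ⟨q, hq, hfq⟩ := hge ε hε
  have hconn : IsPreconnected (Metric.ball e ε ∩ J) :=
    ((Real.ball_eq_Ioo e ε ▸ ordConnected_Ioo).inter hJ).isPreconnected
  exact hconn.intermediate_value₂ hp hq (hf.mono inter_subset_right) continuousOn_const hfp hfq

lemma tendstoOrEventuallyZero_of_isClosed {a : ℝ → ℝ} {S : Set ℝ} (hS : IsClosed S)
    (ha : ContinuousOn a (Ioo 0 1)) (haS : ∀ s ∈ S, ContinuousWithinAt a S s)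
    (hzero : ∀ s ∈ Ioo (0 : ℝ) 1, s ∉ S → a s = 0) (e : ℝ) :
    TendstoOrEventuallyZero a e := by
  have hzero' : ∀ᶠ s in 𝓝[Ioo 0 1] e, s ∉ S → a s = 0 := eventually_mem_nhdsWithin.mono hzero
  by_cases hout : ∀ᶠ s in 𝓝[Ioo 0 1] e, s ∉ S
  · exact Or.inr ((hout.and hzero').mono fun s hs => hs.2 hs.1)
  left
  have hin : ∃ᶠ s in 𝓝[Ioo 0 1] e, s ∈ S :=
    (Filter.not_eventually.1 hout).mono fun _ => not_not.1
  have heS : e ∈ S :=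
    hS.closure_subset (mem_closure_iff_frequently.2 (hin.filter_mono nhdsWithin_le_nhds))
  have hlim : Tendsto a (𝓝[S] e) (𝓝 (a e)) := haS e heS
  by_cases hin' : ∀ᶠ s in 𝓝[Ioo 0 1] e, s ∈ S
  · exact hlim.mono_left (nhdsWithin_le_of_mem hin')
  have hnotin : ∃ᶠ s in 𝓝[Ioo 0 1] e, s ∉ S := Filter.not_eventually.1 hin'
  -- Near `e`, `|a|` is `0` off `S` and close to `|a e|` on `S`, so by the intermediate value
  -- theorem it takes the value `|a e| / 2`, necessarily at points of `S`.
  have hae : a e = 0 := by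
    by_contra hae
    have hnear : ∀ᶠ s in 𝓝[Ioo 0 1] e, s ∈ S → |a s - a e| < |a e| / 2 := by
      have := Metric.tendsto_nhds.1 hlim (|a e| / 2) (by positivity)
      simpa only [Real.dist_eq] using
        (eventually_nhdsWithin_iff.1 this).filter_mono nhdsWithin_le_nhds
    have hhalf : ∃ᶠ s in 𝓝[Ioo 0 1] e, |a s| = |a e| / 2 := by
      refine frequently_eq_of_frequently_le_of_frequently_ge ordConnected_Ioo ha.abs
        ((hnotin.and_eventually hzero').mono fun s hs => ?_)
        ((hin.and_eventually hnear).mono fun s hs => ?_)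
      · rw [hs.2 hs.1, abs_zero]
        positivity
      · linarith [abs_sub_abs_le_abs_sub (a e) (a s), abs_sub_comm (a e) (a s), hs.2 hs.1]
    obtain ⟨s, hs, hsnear, hsz⟩ := (hhalf.and_eventually (hnear.and hzero')).exists
    have hsS : s ∈ S := by
      by_contra hsS
      rw [hsz hsS, abs_zero] at hs
      exact hae (abs_eq_zero.1 (by linarith))
    linarith [abs_sub_abs_le_abs_sub (a e) (a s), abs_sub_comm (a e) (a s), hsnear hsS]
  have hoff : Tendsto a (𝓝[Ioo 0 1 \ S] e) (𝓝 (a e)) := by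
    rw [hae]
    exact tendsto_const_nhds.congr'
      (eventually_nhdsWithin_of_forall fun s hs => (hzero s hs.1 hs.2).symm)
  refine (hlim.sup hoff).mono_left ?_
  rw [← nhdsWithin_union]
  exact nhdsWithin_mono _ fun s hs => by by_cases h : s ∈ S <;> simp [h, hs]

lemma isClosed_setOf_aestronglyMeasurable {T Y E : Type*} [TopologicalSpace T]
    [SequentialSpace T] [MeasurableSpace Y] [TopologicalSpace E]
    [TopologicalSpace.PseudoMetrizableSpace E] {μ : Measure Y} {C : Set T} (hC : IsClosed C)
    {h : T → Y → E} (hcont : ∀ᵐ y ∂μ, ContinuousOn (fun s => h s y) C) :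
    IsClosed {s | s ∈ C ∧ AEStronglyMeasurable (h s) μ} := by
  refine IsSeqClosed.isClosed fun u s hu hlim => ?_
  have hsC : s ∈ C := hC.isSeqClosed (fun k => (hu k).1) hlim
  have huC : Tendsto u atTop (𝓝[C] s) :=
    tendsto_nhdsWithin_iff.2 ⟨hlim, Eventually.of_forall fun k => (hu k).1⟩
  refine ⟨hsC, aestronglyMeasurable_of_tendsto_ae atTop (fun k => (hu k).2) ?_⟩
  filter_upwards [hcont] with y hy using (hy s hsC).tendsto.comp huC

lemma tendstoOrEventuallyZero_integral {Y : Type*} [MeasurableSpace Y] {μ : Measure Y}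
    {h : ℝ → Y → ℝ} {g : Y → ℝ} (hg : Integrable g μ)
    (hcont : ∀ᵐ y ∂μ, ContinuousOn (fun s => h s y) (Icc 0 1))
    (hdom : ∀ᵐ y ∂μ, ∀ s ∈ Icc (0 : ℝ) 1, |h s y| ≤ g y)
    (hint : ContinuousOn (fun s => ∫ y, h s y ∂μ) (Ioo 0 1)) (e : ℝ) :
    TendstoOrEventuallyZero (fun s => ∫ y, h s y ∂μ) e := by
  refine tendstoOrEventuallyZero_of_isClosed
    (isClosed_setOf_aestronglyMeasurable isClosed_Icc hcont) hint (fun s hs => ?_)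
    (fun s hs hsS => integral_undef fun hi =>
      hsS ⟨Ioo_subset_Icc_self hs, hi.aestronglyMeasurable⟩) e
  refine continuousWithinAt_of_dominated (eventually_nhdsWithin_of_forall fun s hs => hs.2)
    (eventually_nhdsWithin_of_forall fun s hs => ?_) hg ?_
  · filter_upwards [hdom] with y hy using hy s hs.1
  · filter_upwards [hcont] with y hy using (hy s hs.1).mono fun _ h => h.1

lemma ae_pos_of_eq_withDensity_ofReal {Y : Type*} [MeasurableSpace Y] {ν μ : Measure Y}
    [IsFiniteMeasure μ] {p : Y → ℝ} (hμ : μ = ν.withDensity fun y => ENNReal.ofReal (p y)) :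
    ∀ᵐ y ∂μ, 0 < p y := by
  obtain ⟨ψ, hψm, hψle, hψeq⟩ :=
    exists_measurable_le_lintegral_eq ν fun y => ENNReal.ofReal (p y)
  have hle : ν.withDensity ψ ≤ μ := hμ ▸ withDensity_mono (ae_of_all _ hψle)
  have : IsFiniteMeasure (ν.withDensity ψ) := isFiniteMeasure_of_le μ hle
  have hψμ : ν.withDensity ψ = μ := by
    refine Measure.eq_of_le_of_measure_univ_eq hle ?_
    rw [hμ, withDensity_apply _ .univ, withDensity_apply _ .univ, Measure.restrict_univ, hψeq]
  rw [← hψμ, ae_withDensity_iff hψm]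
  exact ae_of_all _ fun y hy => ENNReal.ofReal_pos.1 ((pos_iff_ne_zero.2 hy).trans_le (hψle y))

lemma continuousOn_log_div_of_abs_le {φ : ℝ → ℝ} {s : Set ℝ} (hs : IsPreconnected s)
    {p c : ℝ} (hp : 0 < p) (hφ : ContinuousOn φ s)
    (hbound : ∀ t ∈ s, |Real.log (p / φ t)| ≤ c) :
    ContinuousOn (fun t => Real.log (p / φ t)) s := by
  have hpc : 0 < p * Real.exp (-c) := by positivity
  have hlow : ∀ t ∈ s, φ t ≠ 0 → p * Real.exp (-c) ≤ |φ t| := by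
    intro t ht hφt
    have h : Real.log (p / |φ t|) ≤ c := by
      rw [← abs_of_pos hp, ← abs_div, Real.log_abs]
      exact (abs_le.1 (hbound t ht)).2
    rw [Real.log_le_iff_le_exp (by positivity), div_le_iff₀ (abs_pos.2 hφt)] at h
    rw [Real.exp_neg, ← div_eq_mul_inv, div_le_iff₀ (Real.exp_pos c)]
    linarith
  -- As `|φ|` is bounded below off its zeros, by connectedness `φ` vanishes everywhere or nowhere.
  by_cases hzero : ∃ t₀ ∈ s, φ t₀ = 0
  · obtain ⟨t₀, ht₀, hφt₀⟩ := hzero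
    have hall : ∀ t ∈ s, φ t = 0 := by
      intro t ht
      by_contra hφt
      obtain ⟨r, hr, hφr⟩ := hs.intermediate_value₂ ht₀ ht hφ.abs continuousOn_const
        (by rw [hφt₀, abs_zero]; positivity : |φ t₀| ≤ p * Real.exp (-c) / 2)
        (by linarith [hlow t ht hφt])
      have hr0 : φ r ≠ 0 := fun h => by
        rw [h, abs_zero] at hφr
        linarith
      linarith [hlow r hr hr0]
    exact (continuousOn_const (c := 0)).congr fun t ht => by simp [hall t ht]
  · push Not at hzero
    exact (continuousOn_const.div hφ hzero).log fun t ht => div_ne_zero hp.ne' (hzero t ht)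

lemma tendstoOrEventuallyZero_integral_log_div {Y : Type*} [MeasurableSpace Y]
    {ν μ : Measure Y} [IsFiniteMeasure μ] {p : Y → ℝ}
    (hμ : μ = ν.withDensity fun y => ENNReal.ofReal (p y)) {r : ℝ → Y → ℝ}
    (hr : ∀ᵐ y ∂μ, ContinuousOn (fun s => r s y) (Icc 0 1)) {g : Y → ℝ} (hg : Integrable g μ)
    (hdom : ∀ᵐ y ∂μ, ∀ s ∈ Icc (0 : ℝ) 1, |Real.log (p y / r s y)| ≤ g y)
    (hint : ContinuousOn (fun s => ∫ y, Real.log (p y / r s y) ∂μ) (Ioo 0 1)) (e : ℝ) :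
    TendstoOrEventuallyZero (fun s => ∫ y, Real.log (p y / r s y) ∂μ) e := by
  refine tendstoOrEventuallyZero_integral hg ?_ hdom hint e
  filter_upwards [ae_pos_of_eq_withDensity_ofReal hμ, hr, hdom] with y hpy hry hdy
  exact continuousOn_log_div_of_abs_le isPreconnected_Icc hpy hry hdy

section Argmin

variable {a b m : ℝ → ℝ} (hm : MapsTo m (Icc 0 1) (Icc 0 1))
  (hmin : ∀ t ∈ Icc (0 : ℝ) 1, ∀ s ∈ Icc (0 : ℝ) 1, s ≠ m t →
    t * a (m t) + (1 - t) * b (m t) < t * a s + (1 - t) * b s)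
include hm hmin

lemma argmin_eq_of_apply_eq {t t' : ℝ} (ht : t ∈ Icc 0 1) (ht' : t' ∈ Icc 0 1)
    (h : a (m t) = a (m t') ∨ b (m t) = b (m t')) : m t = m t' := by
  by_contra hne
  have h₁ := hmin t ht (m t') (hm ht') (Ne.symm hne)
  have h₂ := hmin t' ht' (m t) (hm ht) hne
  rcases h with h | h <;> rw [h] at h₁ h₂
  · rcases le_total (b (m t)) (b (m t')) with hle | hle
    · linarith [mul_nonneg (sub_nonneg.2 ht'.2) (sub_nonneg.2 hle)]
    · linarith [mul_nonneg (sub_nonneg.2 ht.2) (sub_nonneg.2 hle)]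
  · rcases le_total (a (m t)) (a (m t')) with hle | hle
    · linarith [mul_nonneg ht'.1 (sub_nonneg.2 hle)]
    · linarith [mul_nonneg ht.1 (sub_nonneg.2 hle)]

lemma exists_eventually_argmin_eq {L : Filter ℝ} [L.NeBot] (hL : ∀ᶠ t in L, t ∈ Icc 0 1)
    (h : (∀ᶠ t in L, a (m t) = 0) ∨ ∀ᶠ t in L, b (m t) = 0) : ∃ c, ∀ᶠ t in L, m t = c := by
  rcases h with h | h <;> obtain ⟨t₁, ht₁, h₁⟩ := (hL.and h).exists <;>
    exact ⟨m t₁, (hL.and h).mono fun t ht =>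
      argmin_eq_of_apply_eq hm hmin ht.1 ht₁ (by simp [ht.2, h₁])⟩

variable {C : ℝ} (ha : ∀ s ∈ Icc (0 : ℝ) 1, |a s| ≤ C) (hb : ∀ s ∈ Icc (0 : ℝ) 1, |b s| ≤ C)
include ha hb

lemma eq_argmin_of_tendsto {t₀ v : ℝ} (ht₀ : t₀ ∈ Icc 0 1) (hv : v ∈ Icc 0 1)
    {L : Filter ℝ} [L.NeBot] (hL : L ≤ 𝓝[Icc 0 1] t₀)
    (hlim : Tendsto (fun t => t₀ * a (m t) + (1 - t₀) * b (m t)) L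
      (𝓝 (t₀ * a v + (1 - t₀) * b v))) :
    v = m t₀ := by
  by_contra hne
  set w := m t₀
  have hupper : ∀ t ∈ Icc (0 : ℝ) 1, t₀ * a (m t) + (1 - t₀) * b (m t) ≤
      t * a w + (1 - t) * b w + |t₀ - t| * (2 * C) := by
    intro t ht
    have h₁ : t * a (m t) + (1 - t) * b (m t) ≤ t * a w + (1 - t) * b w := by
      rcases eq_or_ne w (m t) with h | h
      · rw [h]
      · exact (hmin t ht w (hm ht₀) h).le
    have h₂ : (t₀ - t) * (a (m t) - b (m t)) ≤ |t₀ - t| * (2 * C) :=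
      calc (t₀ - t) * (a (m t) - b (m t)) ≤ |t₀ - t| * |a (m t) - b (m t)| := by
            rw [← abs_mul]
            exact le_abs_self _
        _ ≤ |t₀ - t| * (2 * C) := by
            gcongr
            linarith [abs_sub (a (m t)) (b (m t)), ha _ (hm ht), hb _ (hm ht)]
    linarith
  have hR : Tendsto (fun t => t * a w + (1 - t) * b w + |t₀ - t| * (2 * C)) L
      (𝓝 (t₀ * a w + (1 - t₀) * b w)) := by
    have hcont : Continuous fun t : ℝ => t * a w + (1 - t) * b w + |t₀ - t| * (2 * C) := by
      fun_prop
    simpa using (hcont.tendsto t₀).mono_left (hL.trans nhdsWithin_le_nhds)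
  have hLIcc : ∀ᶠ t in L, t ∈ Icc (0 : ℝ) 1 := hL self_mem_nhdsWithin
  have := le_of_tendsto_of_tendsto hlim hR (hLIcc.mono hupper)
  linarith [hmin t₀ ht₀ v hv hne]

variable (ha' : ∀ e ∈ Icc (0 : ℝ) 1, TendstoOrEventuallyZero a e)
  (hb' : ∀ e ∈ Icc (0 : ℝ) 1, TendstoOrEventuallyZero b e)
include ha' hb'

lemma eq_argmin_of_tendsto_argmin {t₀ u : ℝ} (ht₀ : t₀ ∈ Icc 0 1) {L : Filter ℝ} [L.NeBot]
    (hL : L ≤ 𝓝[Icc 0 1] t₀) (hmu : Tendsto m L (𝓝 u)) : u = m t₀ := by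
  have hLIcc : ∀ᶠ t in L, t ∈ Icc (0 : ℝ) 1 := hL self_mem_nhdsWithin
  have hu : u ∈ Icc (0 : ℝ) 1 :=
    isClosed_Icc.mem_of_tendsto hmu (hLIcc.mono fun t ht => hm ht)
  by_cases hfreq : ∃ᶠ t in L, m t = u
  · have := frequently_iff_neBot.1 hfreq
    refine eq_argmin_of_tendsto hm hmin ha hb ht₀ hu (L := L ⊓ 𝓟 {t | m t = u})
      (inf_le_left.trans hL) (tendsto_const_nhds.congr' ?_)
    filter_upwards [mem_inf_of_right (mem_principal_self _)] with t (ht : m t = u)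
    rw [ht]
  have hne : ∀ e, ∀ᶠ t in L, m t ≠ e := fun e => by
    rcases eq_or_ne u e with rfl | h
    · exact Filter.not_frequently.1 hfreq
    · exact hmu.eventually_ne h
  have hmIoo : Tendsto m L (𝓝[Ioo 0 1] u) := by
    refine tendsto_nhdsWithin_iff.2 ⟨hmu, ?_⟩
    filter_upwards [hLIcc, hne 0, hne 1] with t ht h₀ h₁
    exact ⟨(hm ht).1.lt_of_ne' h₀, (hm ht).2.lt_of_ne h₁⟩
  by_cases hreg : Tendsto a (𝓝[Ioo 0 1] u) (𝓝 (a u)) ∧ Tendsto b (𝓝[Ioo 0 1] u) (𝓝 (b u))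
  · exact eq_argmin_of_tendsto hm hmin ha hb ht₀ hu hL
      (((hreg.1.comp hmIoo).const_mul t₀).add ((hreg.2.comp hmIoo).const_mul (1 - t₀)))
  -- Otherwise `a` or `b` vanishes near `u`, which makes the minimisers eventually constant.
  have hzero : (∀ᶠ t in L, a (m t) = 0) ∨ ∀ᶠ t in L, b (m t) = 0 := by
    rcases ha' u hu with hat | haz
    · exact Or.inr (hmIoo.eventually ((hb' u hu).resolve_left fun hbt => hreg ⟨hat, hbt⟩))
    · exact Or.inl (hmIoo.eventually haz)
  obtain ⟨c, hc⟩ := exists_eventually_argmin_eq hm hmin hLIcc hzero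
  obtain rfl : u = c :=
    tendsto_nhds_unique hmu (tendsto_const_nhds.congr' (hc.mono fun t ht => ht.symm))
  exact absurd hc.frequently hfreq

theorem continuousOn_argmin : ContinuousOn m (Icc 0 1) := fun t₀ ht₀ =>
  isCompact_Icc.tendsto_nhds_of_unique_mapClusterPt
    (eventually_nhdsWithin_of_forall fun t ht => hm ht) fun u _ hu => by
      have : (𝓝[Icc 0 1] t₀ ⊓ comap m (𝓝 u)).NeBot :=
        neBot_inf_comap_iff_map.2 (by rw [inf_comm]; exact hu)
      exact eq_argmin_of_tendsto_argmin hm hmin ha hb ha' hb' ht₀ inf_le_left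
        (tendsto_comap.mono_left inf_le_right)

end Argmin

lemma exists_argmin_segment_eq {E : Type*} [AddCommGroup E] [Module ℝ E] {S : Set E}
    (hS : Convex ℝ S) {K : ℝ → E → ℝ} {θmin : E → ℝ} (hmem : ∀ σ ∈ S, θmin σ ∈ Icc (0 : ℝ) 1)
    (huniq : ∀ σ ∈ S, ∀ θ ∈ Icc (0 : ℝ) 1, θ ≠ θmin σ → K (θmin σ) σ < K θ σ)
    {σ ρ : E} (hσ : σ ∈ S) (hρ : ρ ∈ S)
    (hK : ∀ θ t : ℝ, K θ (t • σ + (1 - t) • ρ) = t * K θ σ + (1 - t) * K θ ρ) {C : ℝ}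
    (hCσ : ∀ s ∈ Icc (0 : ℝ) 1, |K s σ| ≤ C) (hCρ : ∀ s ∈ Icc (0 : ℝ) 1, |K s ρ| ≤ C)
    (hregσ : ∀ e ∈ Icc (0 : ℝ) 1, TendstoOrEventuallyZero (K · σ) e)
    (hregρ : ∀ e ∈ Icc (0 : ℝ) 1, TendstoOrEventuallyZero (K · ρ) e)
    {θ : ℝ} (hθ : θ ∈ Icc (θmin ρ) (θmin σ)) :
    ∃ t ∈ Icc (0 : ℝ) 1, θmin (t • σ + (1 - t) • ρ) = θ := by
  have hseg : ∀ t ∈ Icc (0 : ℝ) 1, t • σ + (1 - t) • ρ ∈ S :=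
    fun t ht => hS hσ hρ ht.1 (sub_nonneg.2 ht.2) (add_sub_cancel _ _)
  have hcont : ContinuousOn (fun t : ℝ => θmin (t • σ + (1 - t) • ρ)) (Icc 0 1) :=
    continuousOn_argmin (fun t ht => hmem _ (hseg t ht))
      (fun t ht s hs hne => by simpa only [hK] using huniq _ (hseg t ht) s hs hne)
      hCσ hCρ hregσ hregρ
  simpa using intermediate_value_Icc zero_le_one hcont (by simpa using hθ)

lemma IsPreconnected.forall_lt_or_forall_gt {α ι : Type*} [TopologicalSpace α] [LinearOrder α]
    [OrderClosedTopology α] [Finite ι] {I : Set α} (hI : IsPreconnected I) {D : ι → Set α}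
    (hD : ∀ i, IsClosed (D i)) (f : ι → α) (hcover : I ⊆ ⋃ i, D i)
    (hne : ∀ θ ∈ I, ∀ i, θ ∈ D i → f i ≠ θ)
    (hcross : ∀ θ ∈ I, ∀ i j, θ ∈ D i → θ ∈ D j → θ < f i → f j < θ → False) :
    (∀ θ ∈ I, ∀ i, θ ∈ D i → θ < f i) ∨ (∀ θ ∈ I, ∀ i, θ ∈ D i → f i < θ) := by
  set P := ⋃ i, D i ∩ Iic (f i)
  set N := ⋃ i, D i ∩ Ici (f i)
  have hdisj : I ∩ (P ∩ N) = ∅ := by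
    refine eq_empty_of_forall_notMem fun θ ⟨hθ, hP, hN⟩ => ?_
    obtain ⟨i, hi, hθi⟩ := mem_iUnion.1 hP
    obtain ⟨j, hj, hθj⟩ := mem_iUnion.1 hN
    exact hcross θ hθ i j hi hj ((show θ ≤ f i from hθi).lt_of_ne (hne θ hθ i hi).symm)
      ((show f j ≤ θ from hθj).lt_of_ne (hne θ hθ j hj))
  have hcov : I ⊆ P ∪ N := fun θ hθ => by
    obtain ⟨i, hi⟩ := mem_iUnion.1 (hcover hθ)
    rcases le_total θ (f i) with h | h
    exacts [Or.inl (mem_iUnion.2 ⟨i, hi, h⟩), Or.inr (mem_iUnion.2 ⟨i, hi, h⟩)]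
  rcases isPreconnected_iff_subset_of_disjoint_closed.1 hI P N
    (isClosed_iUnion_of_finite fun i => (hD i).inter isClosed_Iic)
    (isClosed_iUnion_of_finite fun i => (hD i).inter isClosed_Ici) hcov hdisj with hP | hN
  · refine Or.inl fun θ hθ i hi => lt_of_not_ge fun h => ?_
    exact eq_empty_iff_forall_notMem.1 hdisj θ ⟨hθ, hP hθ, mem_iUnion.2 ⟨i, hi, h⟩⟩
  · refine Or.inr fun θ hθ i hi => lt_of_not_ge fun h => ?_
    exact eq_empty_iff_forall_notMem.1 hdisj θ ⟨hθ, mem_iUnion.2 ⟨i, hi, h⟩, hN hθ⟩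

lemma StrictMono.notMem_range_of_mem_Ioo {α : Type*} [Preorder α] {N : ℕ}
    {f : Fin (N + 1) → α} (hf : StrictMono f) {n : Fin N} {θ : α}
    (hθ : θ ∈ Ioo (f n.castSucc) (f n.succ)) : θ ∉ range f := by
  rintro ⟨i, rfl⟩
  rcases le_or_gt i n.castSucc with h | h
  · exact (hθ.1.trans_le (hf.monotone h)).false
  · exact (hθ.2.trans_le (hf.monotone (Fin.castSucc_lt_iff_succ_le.1 h))).false

lemma isClosed_setOf_mem_diracPM {α X : Type*} [TopologicalSpace α] [MeasurableSpace α]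
    [OpensMeasurableSpace α] [TopologicalSpace X] {s : Set α} (hs : IsClosed s)
    {F : ProbabilityMeasure s → Set X}
    (hF : IsClosed {p : ProbabilityMeasure s × X | p.2 ∈ F p.1}) (x : X) :
    IsClosed {θ | ∃ hθ : θ ∈ s, x ∈ F (diracPM ⟨θ, hθ⟩)} := by
  have : IsClosed {p : s | x ∈ F (diracPM p)} :=
    hF.preimage (continuous_diracProba.prodMk continuous_const)
  convert this.trans hs using 1
  ext θ
  simp

lemma convex_simplex (X : Type*) [Fintype X] :
    Convex ℝ {σ : EuclideanSpace ℝ X | (∀ x, 0 ≤ σ x) ∧ ∑ x, σ x = 1} := by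
  rintro σ ⟨hσ, hσ₁⟩ ρ ⟨hρ, hρ₁⟩ s t hs ht hst
  refine ⟨fun x => ?_, ?_⟩
  · simpa using add_nonneg (mul_nonneg hs (hσ x)) (mul_nonneg ht (hρ x))
  · simp [Finset.sum_add_distrib, ← Finset.mul_sum, hσ₁, hρ₁, hst]

lemma sum_smul_add_smul_mul {X : Type*} [Fintype X] (σ ρ : EuclideanSpace ℝ X) (t : ℝ)
    (c : X → ℝ) :
    ∑ x, (t • σ + (1 - t) • ρ) x * c x = t * ∑ x, σ x * c x + (1 - t) * ∑ x, ρ x * c x := by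
  simp [add_mul, Finset.sum_add_distrib, Finset.mul_sum, mul_assoc]

lemma self_mem_DFDT_of_support_subset {X : Type*} {ΔX : Set (EuclideanSpace ℝ X)}
    {K : ℝ → EuclideanSpace ℝ X → ℝ} {θmin : EuclideanSpace ℝ X → ℝ}
    (hθminuniq : ∀ σ ∈ ΔX, ∀ θ ∈ Icc (0 : ℝ) 1, θ ≠ θmin σ → K (θmin σ) σ < K θ σ)
    {F : ProbabilityMeasure (Icc (0 : ℝ) 1) → Set X}
    {ΘminSet : EuclideanSpace ℝ X → Set (Icc (0 : ℝ) 1)}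
    (hΘminSet : ∀ σ, ΘminSet σ =
      {θ : Icc (0 : ℝ) 1 | ∀ θ' : Icc (0 : ℝ) 1, K ↑θ σ ≤ K ↑θ' σ})
    {DFDT : EuclideanSpace ℝ X → Set (EuclideanSpace ℝ X)}
    (hDFDT : ∀ σ, DFDT σ = {ρ | ρ ∈ ΔX ∧ ∀ x, 0 < ρ x →
      ∃ μ : ProbabilityMeasure (Icc (0 : ℝ) 1),
        (μ : Measure (Icc (0 : ℝ) 1)) (ΘminSet σ) = 1 ∧ x ∈ F μ})
    {σ : EuclideanSpace ℝ X} (hσ : σ ∈ ΔX) (hθ : θmin σ ∈ Icc (0 : ℝ) 1)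
    (hsupp : ∀ x, 0 < σ x → x ∈ F (diracPM ⟨θmin σ, hθ⟩)) : σ ∈ DFDT σ := by
  rw [hDFDT]
  refine ⟨hσ, fun x hx => ⟨diracPM ⟨θmin σ, hθ⟩, Measure.dirac_apply_of_mem ?_, hsupp x hx⟩⟩
  rw [hΘminSet]
  intro θ'
  rcases eq_or_ne (θ' : ℝ) (θmin σ) with h | h
  · rw [h]
  · exact (hθminuniq σ hσ θ' θ'.2 h).le

theorem stmt13_general
    {X : Type} [Fintype X] [DecidableEq X]
    [TopologicalSpace X]
    {Y : Type} [MeasurableSpace Y]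
    (ν : Measure Y)
    (Q : X → Measure Y) (hQprob : ∀ x, IsProbabilityMeasure (Q x))
    (q : X → Y → ℝ)
    (hq : ∀ x, Q x = ν.withDensity fun y => ENNReal.ofReal (q x y))
    -- the model space is Θ = [0,1] ⊂ ℝ
    (qθ : ℝ → X → Y → ℝ)
    (hqθcont : ∀ x, ∀ᵐ y ∂Q x, ContinuousOn (fun θ : ℝ => qθ θ x y) (Set.Icc 0 1))
    (g : X → Y → ℝ) (hgL2 : ∀ x, MemLp (g x) 2 (Q x))
    (hdom : ∀ x, ∀ᵐ y ∂Q x, ∀ θ ∈ Set.Icc (0 : ℝ) 1,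
      |Real.log (q x y / qθ θ x y)| ≤ g x y)
    (ΔX : Set (EuclideanSpace ℝ X))
    (hΔX : ΔX = {σ | (∀ x, 0 ≤ σ x) ∧ ∑ x, σ x = 1})
    (K : ℝ → EuclideanSpace ℝ X → ℝ)
    (hK : ∀ θ σ, K θ σ = ∑ x, σ x * ∫ y, Real.log (q x y / qθ θ x y) ∂(Q x))
    -- identifiability: unique KL minimizer θ(σ) on [0,1]
    (θmin : EuclideanSpace ℝ X → ℝ)
    (hθminmem : ∀ σ ∈ ΔX, θmin σ ∈ Set.Icc (0 : ℝ) 1)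
    (hθminuniq : ∀ σ ∈ ΔX, ∀ θ ∈ Set.Icc (0 : ℝ) 1, θ ≠ θmin σ → K (θmin σ) σ < K θ σ)
    -- smoothness and the second-order condition at interior minimizers
    (hsmooth : ∀ σ ∈ ΔX, ContDiffOn ℝ 2 (fun θ => K θ σ) (Set.Ioo 0 1))
    -- the policy correspondence F, upper hemi-continuous (closed graph), nonempty-valued
    (F : ProbabilityMeasure (Set.Icc (0 : ℝ) 1) → Set X)
    (hFne : ∀ μ, (F μ).Nonempty)
    (hFgraph : IsClosed {p : ProbabilityMeasure (Set.Icc (0 : ℝ) 1) × X | p.2 ∈ F p.1})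
    -- the set of closest models, ΔF(ΔΘ(σ)), and point masses
    (ΘminSet : EuclideanSpace ℝ X → Set (Set.Icc (0 : ℝ) 1))
    (hΘminSet : ∀ σ, ΘminSet σ =
      {θ : Set.Icc (0 : ℝ) 1 | ∀ θ' : Set.Icc (0 : ℝ) 1, K ↑θ σ ≤ K ↑θ' σ})
    (DFDT : EuclideanSpace ℝ X → Set (EuclideanSpace ℝ X))
    (hDFDT : ∀ σ, DFDT σ = {ρ | ρ ∈ ΔX ∧ ∀ x, 0 < ρ x →
      ∃ μ : ProbabilityMeasure (Set.Icc (0 : ℝ) 1),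
        (μ : Measure (Set.Icc (0 : ℝ) 1)) (ΘminSet σ) = 1 ∧ x ∈ F μ})
    (δ : X → EuclideanSpace ℝ X)
    (hδ : ∀ x x', δ x x' = if x' = x then (1 : ℝ) else 0)
    -- the set of equilibrium models, assumed finite, enumerated with 0 and 1
    (Θstar : Set ℝ)
    (hΘstar : Θstar = {θs | ∃ σ ∈ ΔX, σ ∈ DFDT σ ∧ θmin σ = θs})
    (N : ℕ) (θseq : Fin (N + 1) → ℝ)
    (hmono : StrictMono θseq)
    (hrange : Set.range θseq = Θstar ∪ {0, 1}) :
    ∀ n : Fin N,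
      (∀ θ : ℝ, ∀ hθ : θ ∈ Set.Icc (0 : ℝ) 1,
        θ ∈ Set.Ioo (θseq n.castSucc) (θseq n.succ) →
        ∀ x ∈ F (diracPM (⟨θ, hθ⟩ : Set.Icc (0 : ℝ) 1)), θ < θmin (δ x))
      ∨ (∀ θ : ℝ, ∀ hθ : θ ∈ Set.Icc (0 : ℝ) 1,
        θ ∈ Set.Ioo (θseq n.castSucc) (θseq n.succ) →
        ∀ x ∈ F (diracPM (⟨θ, hθ⟩ : Set.Icc (0 : ℝ) 1)), θmin (δ x) < θ) := by
  intro n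
  have hrange_Icc : range θseq ⊆ Icc 0 1 := by
    rw [hrange, hΘstar]
    rintro _ (⟨σ, hσ, -, rfl⟩ | rfl | rfl)
    · exact hθminmem σ hσ
    all_goals norm_num
  have hI : Ioo (θseq n.castSucc) (θseq n.succ) ⊆ Icc 0 1 :=
    Ioo_subset_Icc_self.trans (Icc_subset_Icc (hrange_Icc (mem_range_self _)).1
      (hrange_Icc (mem_range_self _)).2)
  have hgap : ∀ σ ∈ ΔX, ∀ hθ : θmin σ ∈ Icc (0 : ℝ) 1,
      (∀ x, 0 < σ x → x ∈ F (diracPM ⟨θmin σ, hθ⟩)) →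
      θmin σ ∉ Ioo (θseq n.castSucc) (θseq n.succ) := fun σ hσ hθ hsupp hσI => by
    refine hmono.notMem_range_of_mem_Ioo hσI ?_
    rw [hrange, hΘstar]
    exact Or.inl ⟨σ, hσ, self_mem_DFDT_of_support_subset hθminuniq hΘminSet hDFDT hσ hθ hsupp, rfl⟩
  have hconv : Convex ℝ ΔX := hΔX ▸ convex_simplex X
  have hvertex : ∀ x, δ x ∈ ΔX := fun x =>
    hΔX ▸ ⟨fun x' => by rw [hδ]; split_ifs <;> norm_num, by simp [hδ]⟩
  have hKvertex : ∀ x s, K s (δ x) = ∫ y, Real.log (q x y / qθ s x y) ∂Q x := fun x s => by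
    simp [hK, hδ]
  have hg : ∀ x, Integrable (g x) (Q x) := fun x => (hgL2 x).integrable one_le_two
  have hreg : ∀ x, ∀ e ∈ Icc (0 : ℝ) 1, TendstoOrEventuallyZero (K · (δ x)) e := fun x e _ => by
    simp only [hKvertex]
    exact tendstoOrEventuallyZero_integral_log_div (hq x) (hqθcont x) (hg x) (hdom x)
      (by simpa only [hKvertex] using (hsmooth _ (hvertex x)).continuousOn) e
  have hbound : ∀ x, ∀ s ∈ Icc (0 : ℝ) 1, |K s (δ x)| ≤ ∫ y, g x y ∂Q x := fun x s hs => by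
    rw [hKvertex]
    exact norm_integral_le_of_norm_le (hg x)
      ((hdom x).mono fun y hy => (Real.norm_eq_abs _).trans_le (hy s hs))
  refine (IsPreconnected.forall_lt_or_forall_gt (isPreconnected_Ioo (a := θseq n.castSucc)
    (b := θseq n.succ)) (isClosed_setOf_mem_diracPM isClosed_Icc hFgraph) (fun x => θmin (δ x))
    ?_ ?_ ?_).imp (fun h θ hθ hθI x hx => h θ hθI x ⟨hθ, hx⟩)
    (fun h θ hθ hθI x hx => h θ hθI x ⟨hθ, hx⟩)
  · intro θ hθ
    obtain ⟨x, hx⟩ := hFne (diracPM ⟨θ, hI hθ⟩)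
    exact mem_iUnion.2 ⟨x, hI hθ, hx⟩
  · rintro θ hθI x ⟨hθ, hx⟩ rfl
    refine hgap _ (hvertex x) hθ (fun x' hx' => ?_) hθI
    obtain rfl : x' = x := by
      by_contra h
      simp [hδ, h] at hx'
    exact hx
  · rintro θ hθI x₁ x₂ ⟨hθ, hx₁⟩ ⟨_, hx₂⟩ hlt hgt
    obtain ⟨t, ht, rfl⟩ := exists_argmin_segment_eq hconv hθminmem hθminuniq
      (hvertex x₁) (hvertex x₂) (fun θ t => by simp only [hK, sum_smul_add_smul_mul])
      (fun s hs => (hbound x₁ s hs).trans (le_max_left _ _))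
      (fun s hs => (hbound x₂ s hs).trans (le_max_right _ _)) (hreg x₁) (hreg x₂)
      ⟨hgt.le, hlt.le⟩
    refine hgap _ (hconv (hvertex x₁) (hvertex x₂) ht.1 (sub_nonneg.2 ht.2)
      (add_sub_cancel _ _)) hθ (fun x hx => ?_) hθI
    have : x = x₁ ∨ x = x₂ := by
      by_contra h
      push Not at h
      simp [hδ, h.1, h.2] at hx
    rcases this with rfl | rfl
    exacts [hx₁, hx₂]

/-- If the set Θ* of equilibrium models is finite and
`Θ* ∪ {0,1} = {θ_0 < … < θ_N}`, then on each interval `(θ_n, θ_{n+1})` the best-reply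
dynamics of the closest model is unidirectional: either `θ(δ_x) > θ` for every
`θ` in the interval and every `x ∈ F(δ_θ)`, or `θ(δ_x) < θ` for every such `θ, x`. -/
theorem stmt13
    {X : Type} [Fintype X] [Nonempty X] [DecidableEq X]
    [TopologicalSpace X] [DiscreteTopology X]
    {Y : Type} [MeasurableSpace Y] [MetricSpace Y] [CompactSpace Y] [BorelSpace Y]
    (ν : Measure Y) [SigmaFinite ν]
    (Q : X → Measure Y) (hQprob : ∀ x, IsProbabilityMeasure (Q x))
    (q : X → Y → ℝ)
    (hq : ∀ x, Q x = ν.withDensity fun y => ENNReal.ofReal (q x y))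
    -- the model space is Θ = [0,1] ⊂ ℝ
    (Qθ : ℝ → X → Measure Y)
    (hQθprob : ∀ θ ∈ Set.Icc (0 : ℝ) 1, ∀ x, IsProbabilityMeasure (Qθ θ x))
    (qθ : ℝ → X → Y → ℝ)
    (hqθ : ∀ θ ∈ Set.Icc (0 : ℝ) 1, ∀ x,
      Qθ θ x = ν.withDensity fun y => ENNReal.ofReal (qθ θ x y))
    (hqθcont : ∀ x, ∀ᵐ y ∂Q x, ContinuousOn (fun θ : ℝ => qθ θ x y) (Set.Icc 0 1))
    (g : X → Y → ℝ) (hgL2 : ∀ x, MemLp (g x) 2 (Q x))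
    (hdom : ∀ x, ∀ᵐ y ∂Q x, ∀ θ ∈ Set.Icc (0 : ℝ) 1,
      |Real.log (q x y / qθ θ x y)| ≤ g x y)
    (ΔX : Set (EuclideanSpace ℝ X))
    (hΔX : ΔX = {σ | (∀ x, 0 ≤ σ x) ∧ ∑ x, σ x = 1})
    (K : ℝ → EuclideanSpace ℝ X → ℝ)
    (hK : ∀ θ σ, K θ σ = ∑ x, σ x * ∫ y, Real.log (q x y / qθ θ x y) ∂(Q x))
    -- identifiability: unique KL minimizer θ(σ) on [0,1]
    (θmin : EuclideanSpace ℝ X → ℝ)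
    (hθminmem : ∀ σ ∈ ΔX, θmin σ ∈ Set.Icc (0 : ℝ) 1)
    (hθminuniq : ∀ σ ∈ ΔX, ∀ θ ∈ Set.Icc (0 : ℝ) 1, θ ≠ θmin σ → K (θmin σ) σ < K θ σ)
    -- smoothness and the second-order condition at interior minimizers
    (hsmooth : ∀ σ ∈ ΔX, ContDiffOn ℝ 2 (fun θ => K θ σ) (Set.Ioo 0 1))
    (hsoc : ∀ σ ∈ ΔX, θmin σ ∈ Set.Ioo (0 : ℝ) 1 →
      0 < deriv (deriv fun θ => K θ σ) (θmin σ))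
    -- the policy correspondence F, upper hemi-continuous (closed graph), nonempty-valued
    (F : ProbabilityMeasure (Set.Icc (0 : ℝ) 1) → Set X)
    (hFne : ∀ μ, (F μ).Nonempty)
    (hFgraph : IsClosed {p : ProbabilityMeasure (Set.Icc (0 : ℝ) 1) × X | p.2 ∈ F p.1})
    -- the set of closest models, ΔF(ΔΘ(σ)), and point masses
    (ΘminSet : EuclideanSpace ℝ X → Set (Set.Icc (0 : ℝ) 1))
    (hΘminSet : ∀ σ, ΘminSet σ =
      {θ : Set.Icc (0 : ℝ) 1 | ∀ θ' : Set.Icc (0 : ℝ) 1, K ↑θ σ ≤ K ↑θ' σ})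
    (DFDT : EuclideanSpace ℝ X → Set (EuclideanSpace ℝ X))
    (hDFDT : ∀ σ, DFDT σ = {ρ | ρ ∈ ΔX ∧ ∀ x, 0 < ρ x →
      ∃ μ : ProbabilityMeasure (Set.Icc (0 : ℝ) 1),
        (μ : Measure (Set.Icc (0 : ℝ) 1)) (ΘminSet σ) = 1 ∧ x ∈ F μ})
    (δ : X → EuclideanSpace ℝ X)
    (hδ : ∀ x x', δ x x' = if x' = x then (1 : ℝ) else 0)
    -- the set of equilibrium models, assumed finite, enumerated with 0 and 1
    (Θstar : Set ℝ)
    (hΘstar : Θstar = {θs | ∃ σ ∈ ΔX, σ ∈ DFDT σ ∧ θmin σ = θs})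
    (hfin : Θstar.Finite)
    (N : ℕ) (θseq : Fin (N + 1) → ℝ)
    (hmono : StrictMono θseq)
    (hrange : Set.range θseq = Θstar ∪ {0, 1}) :
    ∀ n : Fin N,
      (∀ θ : ℝ, ∀ hθ : θ ∈ Set.Icc (0 : ℝ) 1,
        θ ∈ Set.Ioo (θseq n.castSucc) (θseq n.succ) →
        ∀ x ∈ F (diracPM (⟨θ, hθ⟩ : Set.Icc (0 : ℝ) 1)), θ < θmin (δ x))
      ∨ (∀ θ : ℝ, ∀ hθ : θ ∈ Set.Icc (0 : ℝ) 1,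
        θ ∈ Set.Ioo (θseq n.castSucc) (θseq n.succ) →
        ∀ x ∈ F (diracPM (⟨θ, hθ⟩ : Set.Icc (0 : ℝ) 1)), θmin (δ x) < θ) :=
  stmt13_general ν Q hQprob q hq qθ hqθcont g hgL2 hdom ΔX hΔX K hK θmin hθminmem hθminuniq hsmooth
    F hFne hFgraph ΘminSet hΘminSet DFDT hDFDT δ hδ Θstar hΘstar N θseq hmono hrange
end
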